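/- arXiv:2501.05720 — 2 statements merged into one kernel-verified Lean document; each statement's English description precedes it below -/
import Mathlib

section
/- Let k be a field and let L be the product of two 3-element chains with componentwise order (the divisor lattice of 36, which is the lattice of lower sets of the poset (2+2)). Then for every compatible monomial order ⪯ on S = k[x_α : α ∈ L], the set F_L does not form a Khovanskii basis of R(L) with respect to ⪯. -/
open MvPolynomial

/-- The leading exponent (multidegree) of a multivariate polynomial with respect to a
monomial order. -/
noncomputable def MonomialOrder.leadDegree {σ : Type*} (m : MonomialOrder σ)
    {R : Type*} [CommSemiring R] (f : MvPolynomial σ R) : σ →₀ ℕ :=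
  m.toSyn.symm (f.support.sup fun d => m.toSyn d)

/-- The leading term `in_⪯(f)` of a multivariate polynomial with respect to a
monomial order. -/
noncomputable def MonomialOrder.leadTerm {σ : Type*} (m : MonomialOrder σ)
    {R : Type*} [CommSemiring R] (f : MvPolynomial σ R) : MvPolynomial σ R :=
  MvPolynomial.monomial (m.leadDegree f) (f.coeff (m.leadDegree f))

/-- `F` is a Khovanskii (SAGBI) basis of the subalgebra `R` with respect to the monomial
order `m`: the subalgebra generated by the leading terms of nonzero elements of `F` equals
the subalgebra generated by the leading terms of nonzero elements of `R`. -/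
def IsKhovanskiiBasis {σ k : Type*} [Field k] (m : MonomialOrder σ)
    (R : Subalgebra k (MvPolynomial σ k)) (F : Set (MvPolynomial σ k)) : Prop :=
  F ⊆ (R : Set (MvPolynomial σ k)) ∧
  Algebra.adjoin k (m.leadTerm '' {f ∈ F | f ≠ 0}) =
    Algebra.adjoin k (m.leadTerm '' {f ∈ (R : Set (MvPolynomial σ k)) | f ≠ 0})

/-- The binomial `f_{α,β} = x_α x_β - x_{α⊓β} x_{α⊔β}`. -/
noncomputable def hibiPoly (k : Type*) [Field k] {σ : Type*} [Lattice σ] (α β : σ) :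
    MvPolynomial σ k :=
  X α * X β - X (α ⊓ β) * X (α ⊔ β)

/-- The set `F_L = {f_{α,β} : α, β ∈ L incomparable}`. -/
def hibiSet (k : Type*) [Field k] (σ : Type*) [Lattice σ] : Set (MvPolynomial σ k) :=
  {g | ∃ α β : σ, ¬ α ≤ β ∧ ¬ β ≤ α ∧ g = hibiPoly k α β}

/-- A monomial order is compatible if the leading term of each `f_{α,β}` is `x_α x_β`. -/
def IsCompatible (k : Type*) [Field k] {σ : Type*} [Lattice σ] (m : MonomialOrder σ) : Prop :=
  ∀ α β : σ, ¬ α ≤ β → ¬ β ≤ α → m.leadTerm (hibiPoly k α β) = X α * X β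

/-- `P` is `(2+2)`-free. -/
def TwoTwoFree (P : Type*) [PartialOrder P] : Prop :=
  ¬ ∃ a b c d : P, a < b ∧ c < d ∧ a ≠ c ∧ a ≠ d ∧ b ≠ c ∧ b ≠ d ∧
    ¬ a ≤ c ∧ ¬ c ≤ a ∧ ¬ a ≤ d ∧ ¬ d ≤ a ∧ ¬ b ≤ c ∧ ¬ c ≤ b ∧ ¬ b ≤ d ∧ ¬ d ≤ b

/-- `P` is `(1+1+1)`-free: no antichain of three elements. -/
def OneOneOneFree (P : Type*) [PartialOrder P] : Prop :=
  ¬ ∃ a b c : P, a ≠ b ∧ a ≠ c ∧ b ≠ c ∧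
    ¬ a ≤ b ∧ ¬ b ≤ a ∧ ¬ a ≤ c ∧ ¬ c ≤ a ∧ ¬ b ≤ c ∧ ¬ c ≤ b

/-- `P` is irreducible with respect to ordinal sum. -/
def OrdinalSumIrreducible (P : Type*) [PartialOrder P] : Prop :=
  ¬ ∃ A B : Set P, A.Nonempty ∧ B.Nonempty ∧ Disjoint A B ∧ A ∪ B = Set.univ ∧
    ∀ a ∈ A, ∀ b ∈ B, a < b

/-!
Let `D` be the generic `3 × 3` determinant in the variables `x_{(i,j)}`. The combination
`f_{01,10} f_{02,20} - f_{02,10} f_{01,20}` of generators of `R(L)` equals `x_⊥ · D`, so `R(L)`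
contains a nonzero element whose leading monomial is divisible by `x_⊥`. An incomparable pair
never contains `⊥`, so for a compatible order every leading term `x_α x_β` of `F_L` is fixed by
the substitution `x_⊥ ↦ 0`, and hence so is the whole algebra they generate; the leading term
of `x_⊥ · D` is killed by it.
-/

namespace MonomialOrder

variable {σ R : Type*} [CommSemiring R] (m : MonomialOrder σ)

theorem leadTerm_eq_monomial_degree (f : MvPolynomial σ R) :
    m.leadTerm f = monomial (m.degree f) (m.leadingCoeff f) :=
  rfl

theorem degree_X_mul_apply_ne_zero [NoZeroDivisors R] [Nontrivial R] (v : σ)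
    {h : MvPolynomial σ R} (hh : h ≠ 0) : m.degree (X v * h) v ≠ 0 := by
  rw [m.degree_mul (X_ne_zero v) hh, m.degree_X]
  simp

end MonomialOrder

section KillVar

variable {σ k : Type*} [CommSemiring k] [DecidableEq σ]

noncomputable def killVar (v : σ) : MvPolynomial σ k →ₐ[k] MvPolynomial σ k :=
  aeval (Function.update X v 0)

theorem killVar_X_of_ne {v a : σ} (ha : a ≠ v) : killVar (k := k) v (X a) = X a := by
  simp [killVar, Function.update_of_ne ha]

theorem killVar_monomial_of_ne_zero {v : σ} {d : σ →₀ ℕ} (hd : d v ≠ 0) (c : k) :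
    killVar v (monomial d c) = 0 := by
  rw [killVar, aeval_monomial, Finsupp.prod]
  refine mul_eq_zero_of_right _ (Finset.prod_eq_zero (Finsupp.mem_support_iff.mpr hd) ?_)
  simp [zero_pow hd]

end KillVar

section Hibi

variable {σ k : Type*} [Field k] [Lattice σ] [OrderBot σ] [DecidableEq σ]

theorem adjoin_leadTerm_hibiSet_le_equalizer_killVar_bot {m : MonomialOrder σ}
    (hm : IsCompatible k m) :
    Algebra.adjoin k (m.leadTerm '' {f ∈ hibiSet k σ | f ≠ 0}) ≤
      AlgHom.equalizer (killVar ⊥) (AlgHom.id k _) := by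
  refine Algebra.adjoin_le ?_
  rintro _ ⟨f, ⟨⟨α, β, hαβ, hβα, rfl⟩, -⟩, rfl⟩
  have hα : α ≠ ⊥ := by rintro rfl; exact hαβ bot_le
  have hβ : β ≠ ⊥ := by rintro rfl; exact hβα bot_le
  change killVar ⊥ (m.leadTerm (hibiPoly k α β)) = m.leadTerm (hibiPoly k α β)
  rw [hm α β hαβ hβα, map_mul, killVar_X_of_ne hα, killVar_X_of_ne hβ]

theorem not_isKhovanskiiBasis_hibiSet_of_X_bot_mul_mem {m : MonomialOrder σ}
    (hm : IsCompatible k m) {h : MvPolynomial σ k} (hh : h ≠ 0)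
    (hmem : X ⊥ * h ∈ Algebra.adjoin k (hibiSet k σ)) :
    ¬ IsKhovanskiiBasis m (Algebra.adjoin k (hibiSet k σ)) (hibiSet k σ) := by
  rintro ⟨-, hbasis⟩
  have hg : X ⊥ * h ≠ 0 := mul_ne_zero (X_ne_zero _) hh
  have hlead : m.leadTerm (X ⊥ * h) ∈
      Algebra.adjoin k (m.leadTerm '' {f ∈ hibiSet k σ | f ≠ 0}) :=
    hbasis ▸ Algebra.subset_adjoin ⟨X ⊥ * h, ⟨hmem, hg⟩, rfl⟩
  have hfixed := adjoin_leadTerm_hibiSet_le_equalizer_killVar_bot hm hlead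
  rw [AlgHom.mem_equalizer, AlgHom.id_apply, m.leadTerm_eq_monomial_degree,
    killVar_monomial_of_ne_zero (m.degree_X_mul_apply_ne_zero ⊥ hh), eq_comm,
    monomial_eq_zero, m.leadingCoeff_eq_zero_iff] at hfixed
  exact hg hfixed

end Hibi

theorem hibiPoly_mul_sub_mul_eq_X_bot_mul_det (k : Type*) [Field k] :
    hibiPoly k ((0, 1) : Fin 3 × Fin 3) (1, 0) * hibiPoly k ((0, 2) : Fin 3 × Fin 3) (2, 0) -
        hibiPoly k ((0, 2) : Fin 3 × Fin 3) (1, 0) * hibiPoly k ((0, 1) : Fin 3 × Fin 3) (2, 0) =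
      X ⊥ * (Matrix.mvPolynomialX (Fin 3) (Fin 3) k).det := by
  rw [show (⊥ : Fin 3 × Fin 3) = (0, 0) from rfl]
  simp only [hibiPoly, Matrix.det_fin_three, Matrix.mvPolynomialX_apply, Prod.mk_inf_mk,
    Prod.mk_sup_mk]
  norm_num [Fin.ext_iff]
  ring

/-- For the product of two 3-element chains (the divisor lattice of 36), `F_L` does not form
a Khovanskii basis of `R(L)` with respect to any compatible monomial order. -/
theorem statement3 (k : Type*) [Field k]
    (m : MonomialOrder (Fin 3 × Fin 3)) (hm : IsCompatible k m) :
    ¬ IsKhovanskiiBasis m (Algebra.adjoin k (hibiSet k (Fin 3 × Fin 3)))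
      (hibiSet k (Fin 3 × Fin 3)) := by
  refine not_isKhovanskiiBasis_hibiSet_of_X_bot_mul_mem hm
    (Matrix.det_mvPolynomialX_ne_zero (Fin 3) k) ?_
  rw [← hibiPoly_mul_sub_mul_eq_X_bot_mul_det]
  refine sub_mem (mul_mem ?_ ?_) (mul_mem ?_ ?_) <;>
    exact Algebra.subset_adjoin ⟨_, _, by decide, by decide, rfl⟩
end

section
/- Let k be a field and let L be the Boolean lattice of rank 3, i.e., the powerset of a 3-element set ordered by inclusion (the lattice of lower sets of the 3-element antichain (1+1+1)). Then for every compatible monomial order ⪯ on S = k[x_α : α ∈ L], the set F_L does not form a Khovanskii basis of R(L) with respect to ⪯. -/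
open MvPolynomial

/-! The leading terms `x_α x_β` of `F_L` have `α, β` incomparable, hence different from `⊥` and `⊤`,
so they generate a subalgebra of `k[x_α : α ≠ ⊥, ⊤]`. In a Boolean algebra with three disjoint
nonzero elements, however, `R(L)` contains a nonzero element each of whose monomials involves
`x_⊥` or `x_⊤`; its leading term is then not generated by those of `F_L`. -/

namespace MonomialOrder

variable {σ R : Type*} [CommSemiring R] (m : MonomialOrder σ)

theorem leadTerm_notMem_supported_compl {f : MvPolynomial σ R} {t : Set σ} (hf : f ≠ 0)
    (hft : f ∈ Ideal.span (X '' t)) : m.leadTerm f ∉ supported R tᶜ := by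
  obtain ⟨i, hit, hi⟩ := mem_ideal_span_X_image.mp hft _ ((m.degree_mem_support_iff f).mpr hf)
  rw [leadTerm_eq_monomial_degree, mem_supported,
    vars_monomial ((m.leadingCoeff_ne_zero_iff).mpr hf)]
  exact fun h => h (Finsupp.mem_support_iff.mpr hi) hit

end MonomialOrder

section Lattice

variable (k : Type*) [Field k] {σ : Type*} [Lattice σ]

theorem hibiPoly_of_le {α β : σ} (h : α ≤ β) : hibiPoly k α β = 0 := by
  rw [hibiPoly, inf_eq_left.mpr h, sup_eq_right.mpr h, sub_self]

theorem hibiPoly_comm (α β : σ) : hibiPoly k α β = hibiPoly k β α := by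
  rw [hibiPoly, hibiPoly, inf_comm, sup_comm, mul_comm (X α)]

theorem hibiPoly_mem_adjoin_hibiSet (α β : σ) :
    hibiPoly k α β ∈ Algebra.adjoin k (hibiSet k σ) := by
  by_cases hαβ : α ≤ β
  · rw [hibiPoly_of_le k hαβ]
    exact zero_mem _
  by_cases hβα : β ≤ α
  · rw [hibiPoly_comm, hibiPoly_of_le k hβα]
    exact zero_mem _
  exact Algebra.subset_adjoin ⟨α, β, hαβ, hβα, rfl⟩

variable [BoundedOrder σ] {k} {m : MonomialOrder σ}

theorem adjoin_leadTerm_hibiSet_le_supported (hm : IsCompatible k m) :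
    Algebra.adjoin k (m.leadTerm '' {f ∈ hibiSet k σ | f ≠ 0}) ≤ supported k {⊥, ⊤}ᶜ := by
  refine Algebra.adjoin_le ?_
  rintro _ ⟨_, ⟨⟨α, β, hαβ, hβα, rfl⟩, -⟩, rfl⟩
  have hmid : ∀ {γ δ : σ}, ¬ γ ≤ δ → ¬ δ ≤ γ → X γ ∈ supported k {⊥, ⊤}ᶜ := by
    intro γ δ hγδ hδγ
    refine X_mem_supported.mpr ?_
    rintro (rfl | rfl)
    exacts [hγδ bot_le, hδγ le_top]
  rw [hm α β hαβ hβα]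
  exact mul_mem (hmid hαβ hβα) (hmid hβα hαβ)

theorem not_isKhovanskiiBasis_of_mem_span_X_bot_top (hm : IsCompatible k m)
    {g : MvPolynomial σ k} (hgR : g ∈ Algebra.adjoin k (hibiSet k σ)) (hg0 : g ≠ 0)
    (hg : g ∈ Ideal.span (X '' {⊥, ⊤})) :
    ¬ IsKhovanskiiBasis m (Algebra.adjoin k (hibiSet k σ)) (hibiSet k σ) := by
  rintro ⟨-, heq⟩
  refine m.leadTerm_notMem_supported_compl hg0 hg (adjoin_leadTerm_hibiSet_le_supported hm ?_)
  rw [heq]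
  exact Algebra.subset_adjoin ⟨g, ⟨hgR, hg0⟩, rfl⟩

end Lattice

section BooleanAlgebra

variable (k : Type*) [Field k] {σ : Type*} [BooleanAlgebra σ]

theorem hibiPoly_compl (a b : σ) :
    hibiPoly k aᶜ bᶜ = X aᶜ * X bᶜ - X (a ⊔ b)ᶜ * X (a ⊓ b)ᶜ := by
  rw [hibiPoly, compl_sup, compl_inf]

/-- For `a, b, c` partitioning `⊤`, the two products `f_{a,aᶜ} f_{b,bᶜ} f_{c,cᶜ}` and
`f_{a,b} f_{c,cᶜ} f_{aᶜ,bᶜ}` both reduce to `x_a x_b x_c x_{aᶜ} x_{bᶜ} x_{cᶜ}` modulo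
`(x_⊥, x_⊤)`; their difference is the witness. -/
noncomputable def hibiWitness (a b c : σ) : MvPolynomial σ k :=
  hibiPoly k a aᶜ * hibiPoly k b bᶜ * hibiPoly k c cᶜ -
    hibiPoly k a b * hibiPoly k c cᶜ * hibiPoly k aᶜ bᶜ

theorem hibiWitness_mem_adjoin_hibiSet (a b c : σ) :
    hibiWitness k a b c ∈ Algebra.adjoin k (hibiSet k σ) := by
  have h := hibiPoly_mem_adjoin_hibiSet k (σ := σ)
  exact sub_mem (mul_mem (mul_mem (h _ _) (h _ _)) (h _ _))
    (mul_mem (mul_mem (h _ _) (h _ _)) (h _ _))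

variable {k} {a b c : σ}

theorem hibiWitness_mem_span_X_bot_top (hab : a ⊓ b = ⊥) (habc : a ⊔ b = cᶜ) :
    hibiWitness k a b c ∈ Ideal.span (X '' {⊥, ⊤}) := by
  set I : Ideal (MvPolynomial σ k) := Ideal.span (X '' {⊥, ⊤})
  have hbot : Ideal.Quotient.mk I (X ⊥) = 0 :=
    Ideal.Quotient.eq_zero_iff_mem.mpr (Ideal.subset_span ⟨⊥, by simp, rfl⟩)
  have htop : Ideal.Quotient.mk I (X ⊤) = 0 :=
    Ideal.Quotient.eq_zero_iff_mem.mpr (Ideal.subset_span ⟨⊤, by simp, rfl⟩)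
  rw [← Ideal.Quotient.eq_zero_iff_mem, hibiWitness, hibiPoly_compl, hab, habc, compl_compl,
    compl_bot]
  simp only [hibiPoly, hab, habc, inf_compl_eq_bot, sup_compl_eq_top, map_sub, map_mul, hbot, htop,
    mul_zero, zero_mul, sub_zero]
  ring

theorem hibiWitness_ne_zero (hab : a ⊓ b = ⊥) (habc : a ⊔ b = cᶜ) (ha : a ≠ ⊥) (hb : b ≠ ⊥)
    (hc : c ≠ ⊥) : hibiWitness k a b c ≠ 0 := by
  classical
  have ha' : aᶜ ≠ ⊥ := by
    rw [Ne, compl_eq_bot]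
    rintro rfl
    exact hb (by rwa [top_inf_eq] at hab)
  have hb' : bᶜ ≠ ⊥ := by
    rw [Ne, compl_eq_bot]
    rintro rfl
    exact ha (by rwa [inf_top_eq] at hab)
  have hc' : cᶜ ≠ ⊥ := by
    rw [← habc]
    exact fun h => ha (sup_eq_bot_iff.mp h).1
  have htop : (⊤ : σ) ≠ ⊥ := ne_bot_of_le_ne_bot ha le_top
  -- at the point `x_⊥ = 0`, `x_α = 1` otherwise, the first product is `1` and `f_{aᶜ,bᶜ}` vanishes
  intro h
  rw [hibiWitness, hibiPoly_compl, hab, habc, compl_compl, compl_bot] at h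
  have := congrArg (aeval fun s : σ => if s = ⊥ then (0 : k) else 1) h
  simp [hibiPoly, hab, habc, ha, hb, hc, ha', hb', hc', htop] at this

theorem not_isKhovanskiiBasis_of_three_disjoint {m : MonomialOrder σ} (hm : IsCompatible k m)
    (hab : a ⊓ b = ⊥) (habc : a ⊔ b = cᶜ) (ha : a ≠ ⊥) (hb : b ≠ ⊥) (hc : c ≠ ⊥) :
    ¬ IsKhovanskiiBasis m (Algebra.adjoin k (hibiSet k σ)) (hibiSet k σ) :=
  not_isKhovanskiiBasis_of_mem_span_X_bot_top hm (hibiWitness_mem_adjoin_hibiSet k a b c)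
    (hibiWitness_ne_zero hab habc ha hb hc) (hibiWitness_mem_span_X_bot_top hab habc)

end BooleanAlgebra

/-- For the Boolean lattice of rank 3 (the powerset of a 3-element set), `F_L` does not form
a Khovanskii basis of `R(L)` with respect to any compatible monomial order. -/
theorem statement4 (k : Type*) [Field k]
    (m : MonomialOrder (Set (Fin 3))) (hm : IsCompatible k m) :
    ¬ IsKhovanskiiBasis m (Algebra.adjoin k (hibiSet k (Set (Fin 3))))
      (hibiSet k (Set (Fin 3))) := by
  have hab : ({0} : Set (Fin 3)) ⊓ {1} = ⊥ := by
    ext x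
    fin_cases x <;> simp
  have habc : ({0} : Set (Fin 3)) ⊔ {1} = {2}ᶜ := by
    ext x
    fin_cases x <;> simp
  exact not_isKhovanskiiBasis_of_three_disjoint hm hab habc (Set.singleton_ne_empty _)
    (Set.singleton_ne_empty _) (Set.singleton_ne_empty _)
end
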